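/- Let T_{n} denote the star with n leaves and T_{n} ⊙_k the graph obtained by attaching a path with k vertices to the center of the star. Then for every k ≥ 1 and n ≥ 3, the Node-Kayles Grundy value satisfies 𝒢(T_{n} ⊙_k) = 𝒢(T_{n−2} ⊙_k). -/

import Mathlib

/-- The minimum excluded value of a finite set of naturals. -/
noncomputable def mex (s : Finset ℕ) : ℕ := sInf {n : ℕ | n ∉ s}

/-- Node-Kayles Grundy value of the position given by the induced subgraph of `G`
on the finite vertex set `s`: a move picks a vertex `v ∈ s` and removes its closed
neighborhood, and the Grundy value is the mex of the Grundy values of the options.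
(For a disconnected position this agrees with the nim-sum of the components'
Grundy values, by the Sprague–Grundy theory.) -/
noncomputable def nkGrundy {V : Type*} [DecidableEq V] (G : SimpleGraph V) [DecidableRel G.Adj]
    (s : Finset V) : ℕ :=
  mex (s.attach.image fun v =>
    nkGrundy G ((s.erase v.1).filter fun w => ¬ G.Adj v.1 w))
termination_by s.card
decreasing_by
  exact lt_of_le_of_lt (Finset.card_filter_le _ _) (Finset.card_erase_lt_of_mem v.2)

instance {V : Type*} (r : V → V → Prop) [DecidableEq V] [DecidableRel r] :
    DecidableRel (SimpleGraph.fromRel r).Adj :=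
  fun a b => decidable_of_iff _ (SimpleGraph.fromRel_adj r a b).symm

/-- The star with `n` leaves together with a tail path of `k` extra vertices
attached to its center: center `0`, leaves `1, …, n`, path vertices
`n+1, …, n+k` (the center is joined to `n+1`).  Its vertex set is
`{0, …, n+k}`.  This is the graph `T_{n} ⊙_k`. -/
def starTail (n k : ℕ) : SimpleGraph ℕ :=
  SimpleGraph.fromRel (fun a b =>
    (a = 0 ∧ 1 ≤ b ∧ b ≤ n) ∨
    (a = 0 ∧ b = n + 1 ∧ 1 ≤ k) ∨
    (n + 1 ≤ a ∧ a < n + k ∧ b = a + 1))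

instance (n k : ℕ) : DecidableRel (starTail n k).Adj :=
  fun a b => decidable_of_iff _ (SimpleGraph.fromRel_adj _ a b).symm

/-! The leaves `n - 1` and `n` of `T_n ⊙_k` are false twins of the leaf `1`, and adding two
non-adjacent false twins `u, v` of a vertex `w` never changes a Node-Kayles value. By induction:
playing a neighbour of `w` removes `u` and `v` as well, playing another vertex keeps them as twins
(or, for `w` itself, as isolated vertices), and playing `u` or `v` reaches the position obtained by
playing `w`, plus an isolated pair. An isolated pair is itself neutral: the two new options
`s ∪ {u}` and `s ∪ {v}` both have `s` as an option, so neither has the value of `s`.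
Deleting the two leaves and shifting the tail down by two gives `T_{n-2} ⊙_k`. -/

open Finset

lemma mex_notMem (s : Finset ℕ) : mex s ∉ s :=
  Nat.sInf_mem (Infinite.exists_notMem_finset s)

lemma mex_insert_of_ne {s : Finset ℕ} {a : ℕ} (h : a ≠ mex s) : mex (insert a s) = mex s :=
  le_antisymm (Nat.sInf_le (by simp [Ne.symm h, mex_notMem]))
    (Nat.sInf_le fun hs => mex_notMem _ (mem_insert_of_mem hs))

section NodeKayles

variable {V : Type*} [DecidableEq V] {G : SimpleGraph V} [DecidableRel G.Adj]

def nkOption (G : SimpleGraph V) [DecidableRel G.Adj] (v : V) (s : Finset V) : Finset V :=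
  (s.erase v).filter fun w => ¬ G.Adj v w

@[simp]
lemma mem_nkOption {v w : V} {s : Finset V} :
    w ∈ nkOption G v s ↔ w ≠ v ∧ w ∈ s ∧ ¬ G.Adj v w := by
  simp [nkOption, and_assoc]

lemma nkOption_subset (v : V) (s : Finset V) : nkOption G v s ⊆ s :=
  (filter_subset _ _).trans (erase_subset _ _)

lemma nkOption_ssubset {v : V} {s : Finset V} (hv : v ∈ s) : nkOption G v s ⊂ s :=
  (filter_subset _ _).trans_ssubset (erase_ssubset hv)

lemma nkGrundy_eq_mex (s : Finset V) :
    nkGrundy G s = mex (s.image fun v => nkGrundy G (nkOption G v s)) := by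
  rw [nkGrundy]
  congr 1
  ext
  simp [nkOption]

lemma nkGrundy_nkOption_ne {v : V} {s : Finset V} (hv : v ∈ s) :
    nkGrundy G (nkOption G v s) ≠ nkGrundy G s := fun h => by
  have hmem := mem_image_of_mem (fun x => nkGrundy G (nkOption G x s)) hv
  rw [h, nkGrundy_eq_mex s] at hmem
  exact mex_notMem _ hmem

lemma nkOption_insert_of_not_adj {x u : V} (hxu : x ≠ u) (hadj : ¬ G.Adj x u) (s : Finset V) :
    nkOption G x (insert u s) = insert u (nkOption G x s) := by
  ext
  simp only [mem_nkOption, mem_insert]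
  grind

lemma nkOption_insert_of_adj {x u : V} (hadj : G.Adj x u) (s : Finset V) :
    nkOption G x (insert u s) = nkOption G x s := by
  ext
  simp only [mem_nkOption, mem_insert]
  grind

lemma nkOption_insert_self {u : V} {s : Finset V} (hu : u ∉ s) :
    nkOption G u (insert u s) = s.filter fun w => ¬ G.Adj u w := by
  ext
  simp only [mem_nkOption, mem_insert, mem_filter]
  grind

lemma nkGrundy_insert_ne_of_isolated {u : V} {s : Finset V} (hu : u ∉ s)
    (hiu : ∀ x ∈ s, ¬ G.Adj u x) : nkGrundy G (insert u s) ≠ nkGrundy G s := by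
  have h := nkGrundy_nkOption_ne (G := G) (mem_insert_self u s)
  rw [nkOption_insert_self hu, filter_true_of_mem hiu] at h
  exact h.symm

theorem nkGrundy_insert_insert_of_isolated {u v : V} (huv : u ≠ v) (hadj : ¬ G.Adj u v) :
    ∀ {s : Finset V}, u ∉ s → v ∉ s → (∀ x ∈ s, ¬ G.Adj u x) → (∀ x ∈ s, ¬ G.Adj v x) →
      nkGrundy G (insert u (insert v s)) = nkGrundy G s := by
  intro s
  induction s using Finset.strongInduction with
  | _ s ih =>
  intro hu hv hiu hiv
  have hiu' : ∀ x ∈ s, ¬ G.Adj x u := fun x hx h => hiu x hx h.symm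
  have hiv' : ∀ x ∈ s, ¬ G.Adj x v := fun x hx h => hiv x hx h.symm
  have play_u : nkOption G u (insert u (insert v s)) = insert v s := by
    rw [nkOption_insert_self (by simp [huv, hu]), filter_true_of_mem]
    simpa [hadj] using hiu
  have play_v : nkOption G v (insert u (insert v s)) = insert u s := by
    rw [insert_comm, nkOption_insert_self (by simp [huv.symm, hv]), filter_true_of_mem]
    simpa [hadj, G.adj_comm] using hiv
  have play_s : ∀ x ∈ s, nkGrundy G (nkOption G x (insert u (insert v s))) =
      nkGrundy G (nkOption G x s) := fun x hx => by
    rw [nkOption_insert_of_not_adj (ne_of_mem_of_not_mem hx hu) (hiu' x hx),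
      nkOption_insert_of_not_adj (ne_of_mem_of_not_mem hx hv) (hiv' x hx)]
    exact ih _ (nkOption_ssubset hx) (fun h => hu (nkOption_subset _ _ h))
      (fun h => hv (nkOption_subset _ _ h)) (fun y hy => hiu y (nkOption_subset _ _ hy))
      (fun y hy => hiv y (nkOption_subset _ _ hy))
  have hne_u := nkGrundy_insert_ne_of_isolated hu hiu
  have hne_v := nkGrundy_insert_ne_of_isolated hv hiv
  rw [nkGrundy_eq_mex s] at hne_u hne_v
  rw [nkGrundy_eq_mex, image_insert, image_insert, play_u, play_v, image_congr play_s,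
    nkGrundy_eq_mex s, mex_insert_of_ne (by rwa [mex_insert_of_ne hne_u]),
    mex_insert_of_ne hne_u]

lemma nkGrundy_insert_filter_of_twin {t w : V} {s : Finset V} (hw : w ∈ s) (ht : t ∉ s)
    (htw : ∀ x ∈ s, G.Adj t x ↔ G.Adj w x) :
    nkGrundy G (insert t (s.filter fun x => ¬ G.Adj w x)) = nkGrundy G (nkOption G w s) := by
  have hsplit : s.filter (fun x => ¬ G.Adj w x) = insert w (nkOption G w s) := by
    ext x
    simp only [mem_filter, mem_insert, mem_nkOption]
    grind [G.irrefl (v := w)]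
  rw [hsplit]
  refine nkGrundy_insert_insert_of_isolated (ne_of_mem_of_not_mem hw ht).symm
    (by rw [htw w hw]; exact G.irrefl) (fun h => ht (nkOption_subset _ _ h)) (by simp)
    (fun x hx => ?_) (fun x hx => (mem_nkOption.1 hx).2.2)
  rw [htw x (nkOption_subset _ _ hx)]
  exact (mem_nkOption.1 hx).2.2

theorem nkGrundy_insert_insert_of_twins {u v w : V} (huv : u ≠ v) (hadj : ¬ G.Adj u v) :
    ∀ {s : Finset V}, w ∈ s → u ∉ s → v ∉ s → (∀ x ∈ s, G.Adj u x ↔ G.Adj w x) →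
      (∀ x ∈ s, G.Adj v x ↔ G.Adj w x) → nkGrundy G (insert u (insert v s)) = nkGrundy G s := by
  intro s
  induction s using Finset.strongInduction with
  | _ s ih =>
  intro hw hu hv huw hvw
  have huw' : ∀ x ∈ s, G.Adj x u ↔ G.Adj x w := fun x hx => by
    rw [G.adj_comm x u, G.adj_comm x w, huw x hx]
  have hvw' : ∀ x ∈ s, G.Adj x v ↔ G.Adj x w := fun x hx => by
    rw [G.adj_comm x v, G.adj_comm x w, hvw x hx]
  have play_u : nkGrundy G (nkOption G u (insert u (insert v s))) =
      nkGrundy G (nkOption G w s) := by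
    rw [nkOption_insert_self (by simp [huv, hu]), filter_insert, if_pos hadj,
      filter_congr fun x hx => (huw x hx).not, nkGrundy_insert_filter_of_twin hw hv hvw]
  have play_v : nkGrundy G (nkOption G v (insert u (insert v s))) =
      nkGrundy G (nkOption G w s) := by
    rw [insert_comm, nkOption_insert_self (by simp [huv.symm, hv]), filter_insert,
      if_pos (fun h => hadj h.symm), filter_congr fun x hx => (hvw x hx).not,
      nkGrundy_insert_filter_of_twin hw hu huw]
  have play_s : ∀ x ∈ s, nkGrundy G (nkOption G x (insert u (insert v s))) =
      nkGrundy G (nkOption G x s) := fun x hx => by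
    have hsub := nkOption_subset (G := G) x s
    by_cases hxw : G.Adj x w
    · rw [nkOption_insert_of_adj ((huw' x hx).2 hxw),
        nkOption_insert_of_adj ((hvw' x hx).2 hxw)]
    rw [nkOption_insert_of_not_adj (ne_of_mem_of_not_mem hx hu) (mt (huw' x hx).1 hxw),
      nkOption_insert_of_not_adj (ne_of_mem_of_not_mem hx hv) (mt (hvw' x hx).1 hxw)]
    by_cases hxw' : x = w
    · -- playing `w` removes all neighbours of `u` and `v`
      subst hxw'
      refine nkGrundy_insert_insert_of_isolated huv hadj (fun h => hu (hsub h))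
        (fun h => hv (hsub h)) (fun y hy => ?_) (fun y hy => ?_)
      · rw [huw y (hsub hy)]; exact (mem_nkOption.1 hy).2.2
      · rw [hvw y (hsub hy)]; exact (mem_nkOption.1 hy).2.2
    exact ih _ (nkOption_ssubset hx) (by simp [hw, hxw, Ne.symm hxw']) (fun h => hu (hsub h))
      (fun h => hv (hsub h)) (fun y hy => huw y (hsub hy)) (fun y hy => hvw y (hsub hy))
  have hw_val : nkGrundy G (nkOption G w s) ∈ s.image fun x => nkGrundy G (nkOption G x s) :=
    mem_image_of_mem _ hw
  rw [nkGrundy_eq_mex, image_insert, image_insert, play_u, play_v, image_congr play_s,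
    insert_eq_of_mem hw_val, insert_eq_of_mem hw_val, ← nkGrundy_eq_mex]

end NodeKayles

section Relabel

variable {V W : Type*} [DecidableEq V] [DecidableEq W] {G : SimpleGraph V} {H : SimpleGraph W}
  [DecidableRel G.Adj] [DecidableRel H.Adj] {f : V → W}

lemma nkOption_image {s : Finset V} (hf : Set.InjOn f s)
    (hadj : ∀ a ∈ s, ∀ b ∈ s, H.Adj (f a) (f b) ↔ G.Adj a b) {x : V} (hx : x ∈ s) :
    nkOption H (f x) (s.image f) = (nkOption G x s).image f := by
  ext y
  simp only [mem_nkOption, mem_image]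
  constructor
  · rintro ⟨hne, ⟨z, hz, rfl⟩, hnadj⟩
    exact ⟨z, ⟨fun h => hne (h ▸ rfl), hz, fun h => hnadj ((hadj x hx z hz).2 h)⟩, rfl⟩
  · rintro ⟨z, ⟨hzx, hz, hnadj⟩, rfl⟩
    exact ⟨fun h => hzx (hf hz hx h), ⟨z, hz, rfl⟩, fun h => hnadj ((hadj x hx z hz).1 h)⟩

theorem nkGrundy_image_of_injOn : ∀ {s : Finset V}, Set.InjOn f s →
    (∀ a ∈ s, ∀ b ∈ s, H.Adj (f a) (f b) ↔ G.Adj a b) → nkGrundy H (s.image f) = nkGrundy G s := by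
  intro s
  induction s using Finset.strongInduction with
  | _ s ih =>
  intro hf hadj
  rw [nkGrundy_eq_mex, nkGrundy_eq_mex, image_image]
  congr 1
  refine image_congr fun x hx => ?_
  have hsub := nkOption_subset (G := G) x s
  rw [Function.comp_apply, nkOption_image hf hadj hx]
  exact ih _ (nkOption_ssubset hx) (hf.mono (coe_subset.2 hsub))
    (fun a ha b hb => hadj a (hsub ha) b (hsub hb))

end Relabel

lemma nkGrundy_starTail_eq_erase_leaves {n k : ℕ} (hn : 3 ≤ n) :
    nkGrundy (starTail n k) (range (n + k + 1)) =
      nkGrundy (starTail n k) (((range (n + k + 1)).erase n).erase (n - 1)) := by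
  conv_lhs => rw [show range (n + k + 1) =
      insert n (insert (n - 1) (((range (n + k + 1)).erase n).erase (n - 1))) by
    ext
    simp only [mem_insert, mem_erase, mem_range]
    omega]
  refine nkGrundy_insert_insert_of_twins (w := 1) (by omega) ?_ ?_ ?_ ?_ ?_ ?_ <;>
    (try intro x hx) <;>
    simp only [starTail, SimpleGraph.fromRel_adj, mem_erase, mem_range] at * <;> omega

lemma nkGrundy_starTail_sub_two_eq_erase_leaves {n k : ℕ} (hn : 3 ≤ n) :
    nkGrundy (starTail (n - 2) k) (range (n - 2 + k + 1)) =
      nkGrundy (starTail n k) (((range (n + k + 1)).erase n).erase (n - 1)) := by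
  set g : ℕ → ℕ := fun a => if a < n - 1 then a else a + 2 with hg
  have himage : (range (n - 2 + k + 1)).image g = ((range (n + k + 1)).erase n).erase (n - 1) := by
    ext y
    simp only [mem_image, mem_erase, mem_range, hg]
    constructor
    · rintro ⟨a, ha, rfl⟩
      split_ifs <;> omega
    · intro hy
      by_cases hy' : y < n - 1
      · exact ⟨y, by omega, if_pos hy'⟩
      · exact ⟨y - 2, by omega, by rw [if_neg (by omega)]; omega⟩
  rw [← himage]
  refine (nkGrundy_image_of_injOn (fun a _ b _ hab => ?_) fun a ha b hb => ?_).symm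
  · simp only [hg] at hab
    split_ifs at hab <;> omega
  · simp only [mem_range] at ha hb
    simp only [hg, starTail, SimpleGraph.fromRel_adj]
    split_ifs <;> (try simp only [false_and, false_or]) <;> omega

theorem nkGrundy_starTail_reduce_general (n k : ℕ) (hn : 3 ≤ n) :
    nkGrundy (starTail n k) (Finset.range (n + k + 1)) =
      nkGrundy (starTail (n - 2) k) (Finset.range ((n - 2) + k + 1)) := by
  rw [nkGrundy_starTail_eq_erase_leaves hn, nkGrundy_starTail_sub_two_eq_erase_leaves hn]

/-- For every `k ≥ 1` and `n ≥ 3`, the Node-Kayles Grundy value of the star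
with `n` leaves and a tail of `k` vertices equals that of the star with `n - 2`
leaves and the same tail: `𝒢(T_{n} ⊙_k) = 𝒢(T_{n-2} ⊙_k)`. -/
theorem nkGrundy_starTail_reduce (n k : ℕ) (hk : 1 ≤ k) (hn : 3 ≤ n) :
    nkGrundy (starTail n k) (Finset.range (n + k + 1)) =
      nkGrundy (starTail (n - 2) k) (Finset.range ((n - 2) + k + 1)) :=
  nkGrundy_starTail_reduce_general n k hn
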